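/- arXiv:2102.07404 — 3 statements merged into one kernel-verified Lean document; each statement's English description precedes it below -/
import Mathlib

section
/- Clipped-square estimation error bound: let Σ ∈ ℝ^{d×d} be positive definite, φ, θ*, θ̂ ∈ ℝ^d, and H > 0, and suppose ⟨φ, θ*⟩ ∈ [−H, H]. Then |⟨φ, θ*⟩² − (clip_{[−H,H]}(⟨φ, θ̂⟩))²| ≤ min{H², 2H · ‖φ‖_{Σ⁻¹} · ‖θ̂ − θ*‖_Σ}. -/
open BigOperators Finset Matrix

/-- Projection of `x : ℝ` onto the interval `[l, u]`. -/
noncomputable def clip (l u x : ℝ) : ℝ := max l (min x u)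

/-- Weighted (semi-)norm `‖x‖_M = √(xᵀ M x)`. -/
noncomputable def wnorm {d : ℕ} (M : Matrix (Fin d) (Fin d) ℝ) (x : Fin d → ℝ) : ℝ :=
  Real.sqrt (x ⬝ᵥ M.mulVec x)

/-!
Clipping onto `[-H, H]` is 1-Lipschitz and fixes `⟨φ, θ*⟩`, so the clipped error is at most
`|⟨φ, θ̂ - θ*⟩|`, which Cauchy–Schwarz bounds by `‖φ‖_{Σ⁻¹} ‖θ̂ - θ*‖_Σ`. Since both values lie in
`[-H, H]`, `a² - b² = (a + b)(a - b)` gives the factor `2H`, and `a², b² ∈ [0, H²]` gives `H²`.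
-/

section Clip

variable {l u : ℝ}

lemma clip_mem_Icc (h : l ≤ u) (x : ℝ) : clip l u x ∈ Set.Icc l u :=
  ⟨le_max_left _ _, max_le h (min_le_right _ _)⟩

lemma clip_eq_self {x : ℝ} (hx : x ∈ Set.Icc l u) : clip l u x = x := by
  rw [clip, min_eq_left hx.2, max_eq_right hx.1]

lemma abs_clip_sub_clip_le (x y : ℝ) : |clip l u x - clip l u y| ≤ |x - y| := by
  unfold clip
  rw [max_comm l, max_comm l]
  calc |max (min x u) l - max (min y u) l| ≤ |min x u - min y u| := abs_max_sub_max_le_abs _ _ _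
    _ ≤ max |x - y| |u - u| := abs_min_sub_min_le_max _ _ _ _
    _ = |x - y| := by simp

lemma abs_sub_clip_le {a : ℝ} (ha : a ∈ Set.Icc l u) (x : ℝ) : |a - clip l u x| ≤ |a - x| := by
  have h := abs_clip_sub_clip_le (l := l) (u := u) a x
  rwa [clip_eq_self ha] at h

end Clip

section SqSubSq

variable {a b H : ℝ}

lemma abs_sq_sub_sq_le_sq (ha : |a| ≤ H) (hb : |b| ≤ H) : |a ^ 2 - b ^ 2| ≤ H ^ 2 := by
  have ha2 : a ^ 2 ≤ H ^ 2 := sq_le_sq' (abs_le.mp ha).1 (abs_le.mp ha).2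
  have hb2 : b ^ 2 ≤ H ^ 2 := sq_le_sq' (abs_le.mp hb).1 (abs_le.mp hb).2
  rw [abs_sub_le_iff]
  constructor <;> linarith [sq_nonneg a, sq_nonneg b]

lemma abs_sq_sub_sq_le_mul (ha : |a| ≤ H) (hb : |b| ≤ H) :
    |a ^ 2 - b ^ 2| ≤ 2 * H * |a - b| := by
  calc |a ^ 2 - b ^ 2| = |a + b| * |a - b| := by rw [sq_sub_sq, abs_mul]
    _ ≤ 2 * H * |a - b| := by
      gcongr
      linarith [abs_add_le a b]

end SqSubSq

lemma Matrix.PosSemidef.dotProduct_mulVec_mul_le {n : Type*} [Fintype n]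
    {M : Matrix n n ℝ} (hM : M.PosSemidef) (x y : n → ℝ) :
    (x ⬝ᵥ M *ᵥ y) * (y ⬝ᵥ M *ᵥ x) ≤ (x ⬝ᵥ M *ᵥ x) * (y ⬝ᵥ M *ᵥ y) := by
  classical
  simpa only [toLinearMap₂'_apply'] using
    LinearMap.BilinForm.apply_mul_apply_le_of_forall_zero_le (toLinearMap₂' ℝ M)
      (fun v ↦ by simpa [toLinearMap₂'_apply'] using hM.dotProduct_mulVec_nonneg v) x y

/-- Cauchy–Schwarz for the form `Σ⁻¹` applied to `x` and `Σ y`. -/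
lemma abs_dotProduct_le_wnorm_inv_mul_wnorm {d : ℕ} {Sg : Matrix (Fin d) (Fin d) ℝ}
    (hSg : Sg.PosDef) (x y : Fin d → ℝ) : |x ⬝ᵥ y| ≤ wnorm Sg⁻¹ x * wnorm Sg y := by
  have hdet : IsUnit Sg.det := isUnit_iff_ne_zero.mpr hSg.det_pos.ne'
  have hcancel : Sg⁻¹ *ᵥ (Sg *ᵥ y) = y := by
    rw [mulVec_mulVec, nonsing_inv_mul _ hdet, one_mulVec]
  have hswap : (Sg *ᵥ y) ⬝ᵥ Sg⁻¹ *ᵥ x = x ⬝ᵥ y := by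
    rw [dotProduct_mulVec, ← vecMul_transpose, vecMul_vecMul,
      ← conjTranspose_eq_transpose_of_trivial, hSg.isHermitian.eq, mul_nonsing_inv _ hdet,
      vecMul_one, dotProduct_comm]
  have hsq : (x ⬝ᵥ y) ^ 2 ≤ (x ⬝ᵥ Sg⁻¹ *ᵥ x) * (y ⬝ᵥ Sg *ᵥ y) := by
    have h := hSg.inv.posSemidef.dotProduct_mulVec_mul_le x (Sg *ᵥ y)
    rwa [hcancel, hswap, dotProduct_comm (Sg *ᵥ y), ← sq] at h
  have hnonneg : 0 ≤ x ⬝ᵥ Sg⁻¹ *ᵥ x := by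
    simpa using hSg.inv.posSemidef.dotProduct_mulVec_nonneg x
  rw [wnorm, wnorm, ← Real.sqrt_mul hnonneg, ← Real.sqrt_sq_eq_abs]
  exact Real.sqrt_le_sqrt hsq

theorem clipped_square_bound_general
    {d : ℕ} (Sg : Matrix (Fin d) (Fin d) ℝ) (hSg : Sg.PosDef)
    (φ θstar θhat : Fin d → ℝ) (H : ℝ)
    (hrange : -H ≤ φ ⬝ᵥ θstar ∧ φ ⬝ᵥ θstar ≤ H) :
    |(φ ⬝ᵥ θstar)^2 - (clip (-H) H (φ ⬝ᵥ θhat))^2|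
      ≤ min (H^2) (2 * H * (wnorm Sg⁻¹ φ * wnorm Sg (θhat - θstar))) := by
  have hstar : |φ ⬝ᵥ θstar| ≤ H := abs_le.mpr hrange
  have hclip : |clip (-H) H (φ ⬝ᵥ θhat)| ≤ H :=
    abs_le.mpr (clip_mem_Icc (hrange.1.trans hrange.2) _)
  have hH : 0 ≤ H := (abs_nonneg _).trans hstar
  refine le_min (abs_sq_sub_sq_le_sq hstar hclip) ?_
  calc _ ≤ 2 * H * |φ ⬝ᵥ θstar - clip (-H) H (φ ⬝ᵥ θhat)| := abs_sq_sub_sq_le_mul hstar hclip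
    _ ≤ 2 * H * |φ ⬝ᵥ θstar - φ ⬝ᵥ θhat| :=
      mul_le_mul_of_nonneg_left (abs_sub_clip_le hrange _) (by linarith)
    _ = 2 * H * |φ ⬝ᵥ (θhat - θstar)| := by rw [dotProduct_sub, abs_sub_comm]
    _ ≤ _ := by gcongr; exact abs_dotProduct_le_wnorm_inv_mul_wnorm hSg _ _

/-- Clipped-square estimation error bound: if `⟨φ, θ*⟩ ∈ [−H, H]`, then
`|⟨φ, θ*⟩² − (clip_{[−H,H]}⟨φ, θ̂⟩)²| ≤ min{H², 2H‖φ‖_{Σ⁻¹}‖θ̂ − θ*‖_Σ}`. -/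
theorem clipped_square_bound
    {d : ℕ} (Sg : Matrix (Fin d) (Fin d) ℝ) (hSg : Sg.PosDef)
    (φ θstar θhat : Fin d → ℝ) (H : ℝ) (hH : 0 < H)
    (hrange : -H ≤ φ ⬝ᵥ θstar ∧ φ ⬝ᵥ θstar ≤ H) :
    |(φ ⬝ᵥ θstar)^2 - (clip (-H) H (φ ⬝ᵥ θhat))^2|
      ≤ min (H^2) (2 * H * (wnorm Sg⁻¹ φ * wnorm Sg (θhat - θstar))) :=
  clipped_square_bound_general Sg hSg φ θstar θhat H hrange
end

section
/- Optimism and pessimism of the value estimates (Lemma A.6): in the setting described in the context, assume the confidence-set conditions ‖θ̄_h − θ*_h‖_{Σ̄_h} ≤ β and ‖θ̲_h − θ*_h‖_{Σ̲_h} ≤ β hold for every h ∈ {1,…,H}. Let π = (π_h) and ν = (ν_h) be the marginal policies of the joint distributions (μ_h). Then for all h ∈ {1,…,H}, all s ∈ S, a ∈ A, b ∈ B: Q̲_h(s,a,b) − (H−h+1)ε ≤ Q_h^{π,*}(s,a,b) ≤ Q_h^{*,ν}(s,a,b) ≤ Q̄_h(s,a,b) + (H−h+1)ε, and V̲_h(s)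 − (H−h+2)ε ≤ V_h^{π,*}(s) ≤ V_h^{*,ν}(s) ≤ V̄_h(s) + (H−h+2)ε. -/
open BigOperators Finset Matrix

/-- Value function of a finite two-player zero-sum Markov game, defined by backward
recursion on the number `t` of remaining steps; `Vaux H r P p q t s` is the value at
step `h = H + 1 - t` in state `s`. -/
noncomputable def Vaux {S A B : Type*} [Fintype S] [Fintype A] [Fintype B]
    (H : ℕ) (r : ℕ → S → A → B → ℝ) (P : ℕ → S → A → B → S → ℝ)
    (p : ℕ → S → A → ℝ) (q : ℕ → S → B → ℝ) : ℕ → S → ℝ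
  | 0, _ => 0
  | t+1, s =>
      ∑ a, ∑ b, p (H - t) s a * q (H - t) s b *
        (r (H - t) s a b + ∑ s', P (H - t) s a b s' * Vaux H r P p q t s')

/-- `Vval H r P p q h s` = V_h^{p,q}(s). -/
noncomputable def Vval {S A B : Type*} [Fintype S] [Fintype A] [Fintype B]
    (H : ℕ) (r : ℕ → S → A → B → ℝ) (P : ℕ → S → A → B → S → ℝ)
    (p : ℕ → S → A → ℝ) (q : ℕ → S → B → ℝ) (h : ℕ) (s : S) : ℝ :=
  Vaux H r P p q (H + 1 - h) s

/-- Q_h^{p,q}(s,a,b). -/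
noncomputable def Qval {S A B : Type*} [Fintype S] [Fintype A] [Fintype B]
    (H : ℕ) (r : ℕ → S → A → B → ℝ) (P : ℕ → S → A → B → S → ℝ)
    (p : ℕ → S → A → ℝ) (q : ℕ → S → B → ℝ) (h : ℕ) (s : S) (a : A) (b : B) : ℝ :=
  r h s a b + ∑ s', P h s a b s' * Vval H r P p q (h+1) s'

/-- A Markov policy: at every step and state, a probability distribution over actions. -/
def IsPolicy {S A : Type*} [Fintype A] (p : ℕ → S → A → ℝ) : Prop :=
  ∀ h s, (∀ a, 0 ≤ p h s a) ∧ ∑ a, p h s a = 1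

/-- Rewards in `[-1,1]` and transition kernels that are probability mass functions. -/
def IsGame {S A B : Type*} [Fintype S]
    (r : ℕ → S → A → B → ℝ) (P : ℕ → S → A → B → S → ℝ) : Prop :=
  (∀ h s a b, -1 ≤ r h s a b ∧ r h s a b ≤ 1) ∧
  (∀ h s a b, (∀ s', 0 ≤ P h s a b s') ∧ ∑ s', P h s a b s' = 1)

/-- V_h^{*,q}(s). -/
noncomputable def VmaxBR {S A B : Type*} [Fintype S] [Fintype A] [Fintype B]
    (H : ℕ) (r : ℕ → S → A → B → ℝ) (P : ℕ → S → A → B → S → ℝ)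
    (q : ℕ → S → B → ℝ) (h : ℕ) (s : S) : ℝ :=
  sSup {x | ∃ p, IsPolicy p ∧ x = Vval H r P p q h s}

/-- V_h^{p,*}(s). -/
noncomputable def VminBR {S A B : Type*} [Fintype S] [Fintype A] [Fintype B]
    (H : ℕ) (r : ℕ → S → A → B → ℝ) (P : ℕ → S → A → B → S → ℝ)
    (p : ℕ → S → A → ℝ) (h : ℕ) (s : S) : ℝ :=
  sInf {x | ∃ q, IsPolicy q ∧ x = Vval H r P p q h s}

/-- Q_h^{*,q}(s,a,b). -/
noncomputable def QmaxBR {S A B : Type*} [Fintype S] [Fintype A] [Fintype B]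
    (H : ℕ) (r : ℕ → S → A → B → ℝ) (P : ℕ → S → A → B → S → ℝ)
    (q : ℕ → S → B → ℝ) (h : ℕ) (s : S) (a : A) (b : B) : ℝ :=
  sSup {x | ∃ p, IsPolicy p ∧ x = Qval H r P p q h s a b}

/-- Q_h^{p,*}(s,a,b). -/
noncomputable def QminBR {S A B : Type*} [Fintype S] [Fintype A] [Fintype B]
    (H : ℕ) (r : ℕ → S → A → B → ℝ) (P : ℕ → S → A → B → S → ℝ)
    (p : ℕ → S → A → ℝ) (h : ℕ) (s : S) (a : A) (b : B) : ℝ :=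
  sInf {x | ∃ q, IsPolicy q ∧ x = Qval H r P p q h s a b}

/-- The optimistic (`sgn = 1`) / pessimistic (`sgn = -1`) value functions of the
algorithm, defined by backward recursion on the number `t` of remaining steps:
`Vrec … t s` is `V̄`/`V̲` at step `h = H + 1 - t`, i.e. the `μ`-average of the clipped
optimistic/pessimistic action-value built from the estimates `θ` and matrices `Sm`. -/
noncomputable def Vrec {S A B : Type*} [Fintype S] [Fintype A] [Fintype B] {d : ℕ}
    (H : ℕ) (r : ℕ → S → A → B → ℝ) (φ : S → A → B → S → Fin d → ℝ)
    (θ : ℕ → Fin d → ℝ) (Sm : ℕ → Matrix (Fin d) (Fin d) ℝ) (β : ℝ) (sgn : ℝ)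
    (μ : ℕ → S → A → B → ℝ) : ℕ → S → ℝ
  | 0, _ => 0
  | t+1, s =>
      ∑ a, ∑ b, μ (H - t) s a b *
        clip (-(H : ℝ)) H (r (H - t) s a b
          + ((∑ s', Vrec H r φ θ Sm β sgn μ t s' • φ s a b s') ⬝ᵥ θ (H - t))
          + sgn * β * wnorm (Sm (H - t))⁻¹
              (∑ s', Vrec H r φ θ Sm β sgn μ t s' • φ s a b s'))

/-- The optimistic (`sgn = 1`) / pessimistic (`sgn = -1`) action-value estimate
`Q̄_h`/`Q̲_h` of the algorithm (it uses `V̄_{h+1}` = `Vrec … (H - h)`). -/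
noncomputable def Qrec {S A B : Type*} [Fintype S] [Fintype A] [Fintype B] {d : ℕ}
    (H : ℕ) (r : ℕ → S → A → B → ℝ) (φ : S → A → B → S → Fin d → ℝ)
    (θ : ℕ → Fin d → ℝ) (Sm : ℕ → Matrix (Fin d) (Fin d) ℝ) (β : ℝ) (sgn : ℝ)
    (μ : ℕ → S → A → B → ℝ) (h : ℕ) (s : S) (a : A) (b : B) : ℝ :=
  clip (-(H : ℝ)) H (r h s a b
    + ((∑ s', Vrec H r φ θ Sm β sgn μ (H - h) s' • φ s a b s') ⬝ᵥ θ h)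
    + sgn * β * wnorm (Sm h)⁻¹
        (∑ s', Vrec H r φ θ Sm β sgn μ (H - h) s' • φ s a b s'))

/-- `V̄_h`/`V̲_h` as a function of the step index `h`. -/
noncomputable def VrecAt {S A B : Type*} [Fintype S] [Fintype A] [Fintype B] {d : ℕ}
    (H : ℕ) (r : ℕ → S → A → B → ℝ) (φ : S → A → B → S → Fin d → ℝ)
    (θ : ℕ → Fin d → ℝ) (Sm : ℕ → Matrix (Fin d) (Fin d) ℝ) (β : ℝ) (sgn : ℝ)
    (μ : ℕ → S → A → B → ℝ) (h : ℕ) (s : S) : ℝ :=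
  Vrec H r φ θ Sm β sgn μ (H + 1 - h) s

/-!
Backward induction on `h`. For a linear mixture, `∑ s', P_h(s'|s,a,b) V(s') = ⟨φ_V(s,a,b), θ*_h⟩`,
and Cauchy–Schwarz in the `Σ_h`-geometry with the confidence condition puts this within
`β ‖φ_V‖_{Σ_h⁻¹}` of `⟨φ_V, θ_h⟩`. Hence the bonus makes `Q̄_h` dominate `r_h + P_h V̄_{h+1}`,
and clipping costs nothing because true action values lie in `[-H, H]`: an error `c` of `V̄_{h+1}`
against every `V_{h+1}^{p,ν}` becomes an error `c` of `Q̄_h`. Averaging `Q_h^{p,ν}` over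
`p_h × ν_h` and using the ε-CCE condition against the deviation `p_h` adds `ε` for `V̄_h`.
The pessimistic side is symmetric.
-/

theorem clip_sub_le {l u x y c : ℝ} (hc : 0 ≤ c) (hxy : x - c ≤ y) (hly : l ≤ y) :
    clip l u x - c ≤ y := by
  have : clip l u x ≤ max l x := max_le_max le_rfl (min_le_left x u)
  have : max l x ≤ y + c := max_le (by linarith) (by linarith)
  linarith

theorem le_clip_add {l u x y c : ℝ} (hc : 0 ≤ c) (hyx : y ≤ x + c) (hyu : y ≤ u) :
    y ≤ clip l u x + c := by
  have : min x u ≤ clip l u x := le_max_right l (min x u)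
  have : y - c ≤ min x u := le_min (by linarith) (by linarith)
  linarith

theorem abs_dotProduct_mulVec_le {n : Type*} [Fintype n] {M : Matrix n n ℝ} (hM : M.PosSemidef)
    (x y : n → ℝ) :
    |x ⬝ᵥ M *ᵥ y| ≤ √(x ⬝ᵥ M *ᵥ x) * √(y ⬝ᵥ M *ᵥ y) := by
  have h := @abs_real_inner_le_norm _ (M.toSeminormedAddCommGroup hM)
    (M.toInnerProductSpace hM) x y
  change |M *ᵥ y ⬝ᵥ star x| ≤ √(RCLike.re (M *ᵥ x ⬝ᵥ star x)) * √(RCLike.re (M *ᵥ y ⬝ᵥ star y))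
    at h
  simpa only [star_trivial, RCLike.re_to_real, dotProduct_comm (M *ᵥ _)] using h

theorem abs_dotProduct_le_wnorm_inv_mul_wnorm_s6 {d : ℕ} {M : Matrix (Fin d) (Fin d) ℝ}
    (hM : M.PosDef) (x w : Fin d → ℝ) : |x ⬝ᵥ w| ≤ wnorm M⁻¹ x * wnorm M w := by
  have hw : M⁻¹ *ᵥ M *ᵥ w = w := by
    rw [mulVec_mulVec, nonsing_inv_mul _ (isUnit_iff_ne_zero.2 hM.det_pos.ne'), one_mulVec]
  have h := abs_dotProduct_mulVec_le hM.inv.posSemidef x (M *ᵥ w)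
  rwa [hw, dotProduct_comm (M *ᵥ w)] at h

theorem abs_sum_smul_dotProduct_sub_sum_mul_le {S : Type*} [Fintype S] {d : ℕ}
    {M : Matrix (Fin d) (Fin d) ℝ} (hM : M.PosDef) {ψ : S → Fin d → ℝ} {P : S → ℝ}
    {θ θs : Fin d → ℝ} {β : ℝ} (hP : ∀ s, P s = ψ s ⬝ᵥ θs) (hθ : wnorm M (θ - θs) ≤ β)
    (V : S → ℝ) :
    |(∑ s, V s • ψ s) ⬝ᵥ θ - ∑ s, P s * V s| ≤ β * wnorm M⁻¹ (∑ s, V s • ψ s) := by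
  have hPV : ∑ s, P s * V s = (∑ s, V s • ψ s) ⬝ᵥ θs := by
    simp only [sum_dotProduct, smul_dotProduct, smul_eq_mul, hP, mul_comm]
  rw [hPV, ← dotProduct_sub, mul_comm β]
  exact (abs_dotProduct_le_wnorm_inv_mul_wnorm_s6 hM _ _).trans
    (mul_le_mul_of_nonneg_left hθ (Real.sqrt_nonneg _))

section WeightedSum

variable {ι : Type*} [Fintype ι] {w f g : ι → ℝ} {C c : ℝ}

theorem sum_mul_le_of_le (hw : ∀ i, 0 ≤ w i) (hw1 : ∑ i, w i = 1) (hf : ∀ i, f i ≤ C) :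
    ∑ i, w i * f i ≤ C :=
  calc ∑ i, w i * f i ≤ ∑ i, w i * C :=
        sum_le_sum fun i _ => mul_le_mul_of_nonneg_left (hf i) (hw i)
    _ = C := by rw [← sum_mul, hw1, one_mul]

theorem le_sum_mul_of_le (hw : ∀ i, 0 ≤ w i) (hw1 : ∑ i, w i = 1) (hf : ∀ i, C ≤ f i) :
    C ≤ ∑ i, w i * f i :=
  calc C = ∑ i, w i * C := by rw [← sum_mul, hw1, one_mul]
    _ ≤ ∑ i, w i * f i := sum_le_sum fun i _ => mul_le_mul_of_nonneg_left (hf i) (hw i)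

theorem abs_sum_mul_le (hw : ∀ i, 0 ≤ w i) (hw1 : ∑ i, w i = 1) (hf : ∀ i, |f i| ≤ C) :
    |∑ i, w i * f i| ≤ C :=
  abs_le.2 ⟨le_sum_mul_of_le hw hw1 fun i => (abs_le.1 (hf i)).1,
    sum_mul_le_of_le hw hw1 fun i => (abs_le.1 (hf i)).2⟩

theorem sum_mul_le_sum_mul_add (hw : ∀ i, 0 ≤ w i) (hw1 : ∑ i, w i = 1)
    (hfg : ∀ i, f i ≤ g i + c) : ∑ i, w i * f i ≤ ∑ i, w i * g i + c :=
  calc ∑ i, w i * f i ≤ ∑ i, w i * (g i + c) :=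
        sum_le_sum fun i _ => mul_le_mul_of_nonneg_left (hfg i) (hw i)
    _ = ∑ i, w i * g i + c := by simp only [mul_add, sum_add_distrib, ← sum_mul, hw1, one_mul]

theorem sum_mul_sub_le_sum_mul (hw : ∀ i, 0 ≤ w i) (hw1 : ∑ i, w i = 1)
    (hgf : ∀ i, g i - c ≤ f i) : ∑ i, w i * g i - c ≤ ∑ i, w i * f i :=
  calc ∑ i, w i * g i - c = ∑ i, w i * (g i - c) := by
        simp only [mul_sub, sum_sub_distrib, ← sum_mul, hw1, one_mul]
    _ ≤ ∑ i, w i * f i := sum_le_sum fun i _ => mul_le_mul_of_nonneg_left (hgf i) (hw i)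

theorem sum_sum_mul_eq_sum_mul_sum {κ : Type*} [Fintype κ] (v : κ → ℝ) (F : ι → κ → ℝ) :
    ∑ i, ∑ k, w i * v k * F i k = ∑ i, w i * ∑ k, v k * F i k := by
  simp only [mul_assoc, mul_sum]

end WeightedSum

section Policy

variable {S A B : Type*} [Fintype A] [Fintype B]

theorem isPolicy_uniform [Nonempty A] :
    IsPolicy (fun (_ : ℕ) (_ : S) (_ : A) => (Fintype.card A : ℝ)⁻¹) := fun _ _ =>
  ⟨fun _ => by positivity, by simp [Fintype.card_ne_zero]⟩

theorem isPolicy_sum_snd {μ : ℕ → S → A → B → ℝ}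
    (hμ : ∀ h s, (∀ a b, 0 ≤ μ h s a b) ∧ ∑ a, ∑ b, μ h s a b = 1) :
    IsPolicy fun h s a => ∑ b, μ h s a b := fun h s =>
  ⟨fun a => sum_nonneg fun b _ => (hμ h s).1 a b, (hμ h s).2⟩

theorem isPolicy_sum_fst {μ : ℕ → S → A → B → ℝ}
    (hμ : ∀ h s, (∀ a b, 0 ≤ μ h s a b) ∧ ∑ a, ∑ b, μ h s a b = 1) :
    IsPolicy fun h s b => ∑ a, μ h s a b := fun h s =>
  ⟨fun b => sum_nonneg fun a _ => (hμ h s).1 a b, sum_comm.trans (hμ h s).2⟩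

end Policy

section MarkovGame

variable {S A B : Type*} [Fintype S] [Fintype A] [Fintype B] {H : ℕ}
  {r : ℕ → S → A → B → ℝ} {P : ℕ → S → A → B → S → ℝ}
  {p : ℕ → S → A → ℝ} {q : ℕ → S → B → ℝ}

theorem abs_vaux_le (hG : IsGame r P) (hp : IsPolicy p) (hq : IsPolicy q) :
    ∀ (t : ℕ) (s : S), |Vaux H r P p q t s| ≤ t
  | 0, s => by simp [Vaux]
  | t + 1, s => by
    have hstep : ∀ a b,
        |r (H - t) s a b + ∑ s', P (H - t) s a b s' * Vaux H r P p q t s'| ≤ 1 + t := fun a b =>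
      (abs_add_le _ _).trans (add_le_add (abs_le.2 (hG.1 (H - t) s a b))
        (abs_sum_mul_le (hG.2 (H - t) s a b).1 (hG.2 (H - t) s a b).2
          fun s' => abs_vaux_le hG hp hq t s'))
    rw [Vaux, sum_sum_mul_eq_sum_mul_sum, Nat.cast_succ, add_comm (t : ℝ)]
    exact abs_sum_mul_le (hp _ s).1 (hp _ s).2 fun a =>
      abs_sum_mul_le (hq _ s).1 (hq _ s).2 fun b => hstep a b

theorem abs_qval_le (hG : IsGame r P) (hp : IsPolicy p) (hq : IsPolicy q)
    (h : ℕ) (s : S) (a : A) (b : B) : |Qval H r P p q h s a b| ≤ 1 + (H - h : ℕ) := by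
  have hV : ∀ s', |Vval H r P p q (h + 1) s'| ≤ (H - h : ℕ) := fun s' => by
    simpa only [Vval, Nat.add_sub_add_right] using abs_vaux_le hG hp hq (H + 1 - (h + 1)) s'
  exact (abs_add_le _ _).trans (add_le_add (abs_le.2 (hG.1 h s a b))
    (abs_sum_mul_le (hG.2 h s a b).1 (hG.2 h s a b).2 hV))

theorem vval_succ_self (s : S) : Vval H r P p q (H + 1) s = 0 := by
  simp [Vval, Vaux]

theorem vval_eq_sum_qval {h : ℕ} (hh : h ≤ H) (s : S) :
    Vval H r P p q h s = ∑ a, ∑ b, p h s a * q h s b * Qval H r P p q h s a b := by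
  rw [Vval, show H + 1 - h = H - h + 1 by omega, Vaux, Nat.sub_sub_self hh]
  simp only [Qval, Vval, Nat.add_sub_add_right]

end MarkovGame

section ValueStep

variable {S A B : Type*} [Fintype S] [Fintype A] [Fintype B] {H : ℕ}
  {r : ℕ → S → A → B → ℝ} {P : ℕ → S → A → B → S → ℝ}
  {p : ℕ → S → A → ℝ} {q : ℕ → S → B → ℝ} {h : ℕ} {s : S} {Q : A → B → ℝ} {v c ε : ℝ}

theorem vval_le_add_of_qval_le (hp : IsPolicy p) (hq : IsPolicy q) (hh : h ≤ H)
    (hQ : ∀ a b, Qval H r P p q h s a b ≤ Q a b + c) (hdev : ∀ a, ∑ b, q h s b * Q a b ≤ v + ε) :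
    Vval H r P p q h s ≤ v + (c + ε) := by
  rw [vval_eq_sum_qval hh, sum_sum_mul_eq_sum_mul_sum]
  refine sum_mul_le_of_le (hp h s).1 (hp h s).2 fun a => ?_
  linarith [sum_mul_le_sum_mul_add (hq h s).1 (hq h s).2 (hQ a), hdev a]

theorem sub_le_vval_of_le_qval (hp : IsPolicy p) (hq : IsPolicy q) (hh : h ≤ H)
    (hQ : ∀ a b, Q a b - c ≤ Qval H r P p q h s a b) (hdev : ∀ b, v - ε ≤ ∑ a, p h s a * Q a b) :
    v - (c + ε) ≤ Vval H r P p q h s := by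
  rw [vval_eq_sum_qval hh, sum_comm]
  simp only [mul_comm (p h s _) (q h s _)]
  rw [sum_sum_mul_eq_sum_mul_sum]
  refine le_sum_mul_of_le (hq h s).1 (hq h s).2 fun b => ?_
  linarith [sum_mul_sub_le_sum_mul (hp h s).1 (hp h s).2 fun a => hQ a b, hdev b]

end ValueStep

section BestResponse

variable {S A B : Type*} [Fintype S] [Fintype A] [Fintype B] {H : ℕ}
  {r : ℕ → S → A → B → ℝ} {P : ℕ → S → A → B → S → ℝ}
  {p : ℕ → S → A → ℝ} {q : ℕ → S → B → ℝ} {h : ℕ} {s : S} {a : A} {b : B} {c : ℝ}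

theorem vmaxBR_le [Nonempty A] (hV : ∀ p, IsPolicy p → Vval H r P p q h s ≤ c) :
    VmaxBR H r P q h s ≤ c :=
  csSup_le ⟨_, _, isPolicy_uniform, rfl⟩ fun _ ⟨p, hp, hx⟩ => hx ▸ hV p hp

theorem le_vminBR [Nonempty B] (hV : ∀ q, IsPolicy q → c ≤ Vval H r P p q h s) :
    c ≤ VminBR H r P p h s :=
  le_csInf ⟨_, _, isPolicy_uniform, rfl⟩ fun _ ⟨q, hq, hx⟩ => hx ▸ hV q hq

theorem qmaxBR_le [Nonempty A] (hQ : ∀ p, IsPolicy p → Qval H r P p q h s a b ≤ c) :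
    QmaxBR H r P q h s a b ≤ c :=
  csSup_le ⟨_, _, isPolicy_uniform, rfl⟩ fun _ ⟨p, hp, hx⟩ => hx ▸ hQ p hp

theorem le_qminBR [Nonempty B] (hQ : ∀ q, IsPolicy q → c ≤ Qval H r P p q h s a b) :
    c ≤ QminBR H r P p h s a b :=
  le_csInf ⟨_, _, isPolicy_uniform, rfl⟩ fun _ ⟨q, hq, hx⟩ => hx ▸ hQ q hq

theorem vminBR_le_vmaxBR (hG : IsGame r P) (hp : IsPolicy p) (hq : IsPolicy q) :
    VminBR H r P p h s ≤ VmaxBR H r P q h s := by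
  have hV : ∀ p' q', IsPolicy p' → IsPolicy q' → |Vval H r P p' q' h s| ≤ (H + 1 - h : ℕ) :=
    fun p' q' hp' hq' => abs_vaux_le hG hp' hq' _ s
  calc VminBR H r P p h s ≤ Vval H r P p q h s :=
        csInf_le ⟨_, by rintro _ ⟨q', hq', rfl⟩; exact (abs_le.1 (hV p q' hp hq')).1⟩ ⟨q, hq, rfl⟩
    _ ≤ VmaxBR H r P q h s :=
        le_csSup ⟨_, by rintro _ ⟨p', hp', rfl⟩; exact (abs_le.1 (hV p' q hp' hq)).2⟩ ⟨p, hp, rfl⟩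

theorem qminBR_le_qmaxBR (hG : IsGame r P) (hp : IsPolicy p) (hq : IsPolicy q) :
    QminBR H r P p h s a b ≤ QmaxBR H r P q h s a b :=
  calc QminBR H r P p h s a b ≤ Qval H r P p q h s a b :=
        csInf_le ⟨_, by rintro _ ⟨q', hq', rfl⟩; exact (abs_le.1 (abs_qval_le hG hp hq' h s a b)).1⟩
          ⟨q, hq, rfl⟩
    _ ≤ QmaxBR H r P q h s a b :=
        le_csSup ⟨_, by rintro _ ⟨p', hp', rfl⟩; exact (abs_le.1 (abs_qval_le hG hp' hq h s a b)).2⟩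
          ⟨p, hp, rfl⟩

end BestResponse

section Estimates

variable {S A B : Type*} [Fintype S] [Fintype A] [Fintype B] {d H : ℕ}
  {r : ℕ → S → A → B → ℝ} {P : ℕ → S → A → B → S → ℝ} {φ : S → A → B → S → Fin d → ℝ}
  {θ θs : ℕ → Fin d → ℝ} {Sm : ℕ → Matrix (Fin d) (Fin d) ℝ} {β sgn : ℝ}
  {μ : ℕ → S → A → B → ℝ} {p : ℕ → S → A → ℝ} {q : ℕ → S → B → ℝ} {h : ℕ} {c : ℝ}

theorem vrecAt_succ_self (s : S) : VrecAt H r φ θ Sm β sgn μ (H + 1) s = 0 := by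
  simp [VrecAt, Vrec]

theorem vrecAt_succ : VrecAt H r φ θ Sm β sgn μ (h + 1) = Vrec H r φ θ Sm β sgn μ (H - h) := by
  funext s
  rw [VrecAt, Nat.add_sub_add_right]

theorem vrecAt_eq_sum_qrec (hh : h ≤ H) (s : S) :
    VrecAt H r φ θ Sm β sgn μ h s = ∑ a, ∑ b, μ h s a b * Qrec H r φ θ Sm β sgn μ h s a b := by
  rw [VrecAt, show H + 1 - h = H - h + 1 by omega, Vrec, Nat.sub_sub_self hh]
  rfl

theorem qval_le_qrec_add_of_vval_le (hG : IsGame r P) (hp : IsPolicy p) (hq : IsPolicy q)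
    (hmix : ∀ s a b s', P h s a b s' = φ s a b s' ⬝ᵥ θs h) (hM : (Sm h).PosDef)
    (hθ : wnorm (Sm h) (θ h - θs h) ≤ β) (h1 : 1 ≤ h) (hH : h ≤ H) (hc : 0 ≤ c)
    (hV : ∀ s', Vval H r P p q (h + 1) s' ≤ VrecAt H r φ θ Sm β 1 μ (h + 1) s' + c)
    (s : S) (a : A) (b : B) :
    Qval H r P p q h s a b ≤ Qrec H r φ θ Sm β 1 μ h s a b + c := by
  have hbonus := abs_le.1 (abs_sum_smul_dotProduct_sub_sum_mul_le hM (hmix s a b) hθ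
    (VrecAt H r φ θ Sm β 1 μ (h + 1)))
  have hnext := sum_mul_le_sum_mul_add (hG.2 h s a b).1 (hG.2 h s a b).2 hV
  have hQH := (abs_le.1 (abs_qval_le (H := H) hG hp hq h s a b)).2
  rw [Nat.cast_sub hH] at hQH
  rw [Qrec, ← vrecAt_succ]
  refine le_clip_add hc ?_ (by linarith [(Nat.one_le_cast (α := ℝ)).2 h1])
  rw [Qval]
  linarith

theorem qrec_sub_le_qval_of_le_vval (hG : IsGame r P) (hp : IsPolicy p) (hq : IsPolicy q)
    (hmix : ∀ s a b s', P h s a b s' = φ s a b s' ⬝ᵥ θs h) (hM : (Sm h).PosDef)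
    (hθ : wnorm (Sm h) (θ h - θs h) ≤ β) (h1 : 1 ≤ h) (hH : h ≤ H) (hc : 0 ≤ c)
    (hV : ∀ s', VrecAt H r φ θ Sm β (-1) μ (h + 1) s' - c ≤ Vval H r P p q (h + 1) s')
    (s : S) (a : A) (b : B) :
    Qrec H r φ θ Sm β (-1) μ h s a b - c ≤ Qval H r P p q h s a b := by
  have hbonus := abs_le.1 (abs_sum_smul_dotProduct_sub_sum_mul_le hM (hmix s a b) hθ
    (VrecAt H r φ θ Sm β (-1) μ (h + 1)))
  have hnext := sum_mul_sub_le_sum_mul (hG.2 h s a b).1 (hG.2 h s a b).2 hV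
  have hQH := (abs_le.1 (abs_qval_le (H := H) hG hp hq h s a b)).1
  rw [Nat.cast_sub hH] at hQH
  rw [Qrec, ← vrecAt_succ]
  refine clip_sub_le hc ?_ (by linarith [(Nat.one_le_cast (α := ℝ)).2 h1])
  rw [Qval]
  linarith

theorem vval_le_vrecAt_add {ε : ℝ} (hG : IsGame r P)
    (hmix : ∀ h s a b s', P h s a b s' = φ s a b s' ⬝ᵥ θs h) (hM : ∀ h, (Sm h).PosDef)
    (hε : 0 ≤ ε) (hq : IsPolicy q) (hθ : ∀ h, 1 ≤ h → h ≤ H → wnorm (Sm h) (θ h - θs h) ≤ β)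
    (hdev : ∀ h, 1 ≤ h → h ≤ H → ∀ s a,
      ∑ b, q h s b * Qrec H r φ θ Sm β 1 μ h s a b ≤ VrecAt H r φ θ Sm β 1 μ h s + ε)
    (hp : IsPolicy p) (h1 : 1 ≤ h) (hH : h ≤ H + 1) (s : S) :
    Vval H r P p q h s ≤ VrecAt H r φ θ Sm β 1 μ h s + ((H : ℝ) - h + 2) * ε := by
  refine Nat.decreasingInduction'
    (P := fun k => ∀ s, Vval H r P p q k s ≤ VrecAt H r φ θ Sm β 1 μ k s + ((H : ℝ) - k + 2) * ε)
    (fun k hk hhk ih s => ?_) hH (fun s => ?_) s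
  · have hkH : (k : ℝ) + 1 ≤ H + 1 := by exact_mod_cast hk
    have hc : 0 ≤ ((H : ℝ) - (k + 1 : ℕ) + 2) * ε := mul_nonneg (by push_cast; linarith) hε
    have hQ := qval_le_qrec_add_of_vval_le hG hp hq (hmix k) (hM k)
      (hθ k (by omega) (by omega)) (by omega) (by omega) hc ih s
    have := vval_le_add_of_qval_le hp hq (by omega) hQ (hdev k (by omega) (by omega) s)
    push_cast at this
    linarith
  · simp [vval_succ_self, vrecAt_succ_self, hε]

theorem vrecAt_sub_le_vval {ε : ℝ} (hG : IsGame r P)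
    (hmix : ∀ h s a b s', P h s a b s' = φ s a b s' ⬝ᵥ θs h) (hM : ∀ h, (Sm h).PosDef)
    (hε : 0 ≤ ε) (hp : IsPolicy p) (hθ : ∀ h, 1 ≤ h → h ≤ H → wnorm (Sm h) (θ h - θs h) ≤ β)
    (hdev : ∀ h, 1 ≤ h → h ≤ H → ∀ s b,
      VrecAt H r φ θ Sm β (-1) μ h s - ε ≤ ∑ a, p h s a * Qrec H r φ θ Sm β (-1) μ h s a b)
    (hq : IsPolicy q) (h1 : 1 ≤ h) (hH : h ≤ H + 1) (s : S) :
    VrecAt H r φ θ Sm β (-1) μ h s - ((H : ℝ) - h + 2) * ε ≤ Vval H r P p q h s := by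
  refine Nat.decreasingInduction'
    (P := fun k => ∀ s,
      VrecAt H r φ θ Sm β (-1) μ k s - ((H : ℝ) - k + 2) * ε ≤ Vval H r P p q k s)
    (fun k hk hhk ih s => ?_) hH (fun s => ?_) s
  · have hkH : (k : ℝ) + 1 ≤ H + 1 := by exact_mod_cast hk
    have hc : 0 ≤ ((H : ℝ) - (k + 1 : ℕ) + 2) * ε := mul_nonneg (by push_cast; linarith) hε
    have hQ := qrec_sub_le_qval_of_le_vval hG hp hq (hmix k) (hM k) (hθ k (by omega) (by omega))
      (by omega) (by omega) hc ih s
    have := sub_le_vval_of_le_qval hp hq (by omega) hQ (hdev k (by omega) (by omega) s)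
    push_cast at this
    linarith
  · simp [vval_succ_self, vrecAt_succ_self, hε]

theorem qval_le_qrec_add {ε : ℝ} (hG : IsGame r P)
    (hmix : ∀ h s a b s', P h s a b s' = φ s a b s' ⬝ᵥ θs h) (hM : ∀ h, (Sm h).PosDef)
    (hε : 0 ≤ ε) (hq : IsPolicy q) (hθ : ∀ h, 1 ≤ h → h ≤ H → wnorm (Sm h) (θ h - θs h) ≤ β)
    (hdev : ∀ h, 1 ≤ h → h ≤ H → ∀ s a,
      ∑ b, q h s b * Qrec H r φ θ Sm β 1 μ h s a b ≤ VrecAt H r φ θ Sm β 1 μ h s + ε)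
    (hp : IsPolicy p) (h1 : 1 ≤ h) (hH : h ≤ H) (s : S) (a : A) (b : B) :
    Qval H r P p q h s a b ≤ Qrec H r φ θ Sm β 1 μ h s a b + ((H : ℝ) - h + 1) * ε := by
  have hhH : (h : ℝ) ≤ H := by exact_mod_cast hH
  have hc : 0 ≤ ((H : ℝ) - (h + 1 : ℕ) + 2) * ε := mul_nonneg (by push_cast; linarith) hε
  have := qval_le_qrec_add_of_vval_le hG hp hq (hmix h) (hM h) (hθ h h1 hH) h1 hH hc
    (vval_le_vrecAt_add hG hmix hM hε hq hθ hdev hp (by omega) (by omega)) s a b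
  push_cast at this
  linarith

theorem qrec_sub_le_qval {ε : ℝ} (hG : IsGame r P)
    (hmix : ∀ h s a b s', P h s a b s' = φ s a b s' ⬝ᵥ θs h) (hM : ∀ h, (Sm h).PosDef)
    (hε : 0 ≤ ε) (hp : IsPolicy p) (hθ : ∀ h, 1 ≤ h → h ≤ H → wnorm (Sm h) (θ h - θs h) ≤ β)
    (hdev : ∀ h, 1 ≤ h → h ≤ H → ∀ s b,
      VrecAt H r φ θ Sm β (-1) μ h s - ε ≤ ∑ a, p h s a * Qrec H r φ θ Sm β (-1) μ h s a b)
    (hq : IsPolicy q) (h1 : 1 ≤ h) (hH : h ≤ H) (s : S) (a : A) (b : B) :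
    Qrec H r φ θ Sm β (-1) μ h s a b - ((H : ℝ) - h + 1) * ε ≤ Qval H r P p q h s a b := by
  have hhH : (h : ℝ) ≤ H := by exact_mod_cast hH
  have hc : 0 ≤ ((H : ℝ) - (h + 1 : ℕ) + 2) * ε := mul_nonneg (by push_cast; linarith) hε
  have := qrec_sub_le_qval_of_le_vval hG hp hq (hmix h) (hM h) (hθ h h1 hH) h1 hH hc
    (vrecAt_sub_le_vval hG hmix hM hε hp hθ hdev hq (by omega) (by omega)) s a b
  push_cast at this
  linarith

end Estimates

theorem optimism_pessimism_general
    {S A B : Type*} [Fintype S] [Fintype A] [Fintype B]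
    [Nonempty A] [Nonempty B] {d : ℕ}
    (H : ℕ)
    (r : ℕ → S → A → B → ℝ) (P : ℕ → S → A → B → S → ℝ)
    (hGame : IsGame r P)
    (φ : S → A → B → S → Fin d → ℝ) (θs : ℕ → Fin d → ℝ)
    (hmix : ∀ h s a b s', P h s a b s' = φ s a b s' ⬝ᵥ θs h)
    (ε β : ℝ) (hε : 0 ≤ ε)
    (θb θl : ℕ → Fin d → ℝ)
    (Sb Sl : ℕ → Matrix (Fin d) (Fin d) ℝ)
    (hSb : ∀ h, (Sb h).PosDef) (hSl : ∀ h, (Sl h).PosDef)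
    (μ : ℕ → S → A → B → ℝ)
    (hμ : ∀ h s, (∀ a b, 0 ≤ μ h s a b) ∧ ∑ a, ∑ b, μ h s a b = 1)
    -- ε-CCE conditions for (Q̄_h(s,·,·), Q̲_h(s,·,·)) at every step and state:
    (hCCE : ∀ h, 1 ≤ h → h ≤ H → ∀ s : S,
      (∀ a' : A,
        (∑ b, (∑ a, μ h s a b) * Qrec H r φ θb Sb β 1 μ h s a' b) - ε
          ≤ ∑ a, ∑ b, μ h s a b * Qrec H r φ θb Sb β 1 μ h s a b) ∧
      (∀ b' : B,
        ∑ a, ∑ b, μ h s a b * Qrec H r φ θl Sl β (-1) μ h s a b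
          ≤ (∑ a, (∑ b, μ h s a b) * Qrec H r φ θl Sl β (-1) μ h s a b') + ε))
    -- confidence-set conditions:
    (hconf : ∀ h, 1 ≤ h → h ≤ H →
      wnorm (Sb h) (θb h - θs h) ≤ β ∧ wnorm (Sl h) (θl h - θs h) ≤ β) :
    ∀ h, 1 ≤ h → h ≤ H → ∀ (s : S) (a : A) (b : B),
      (Qrec H r φ θl Sl β (-1) μ h s a b - ((H : ℝ) - h + 1) * ε
          ≤ QminBR H r P (fun h s a => ∑ b, μ h s a b) h s a b ∧
        QminBR H r P (fun h s a => ∑ b, μ h s a b) h s a b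
          ≤ QmaxBR H r P (fun h s b => ∑ a, μ h s a b) h s a b ∧
        QmaxBR H r P (fun h s b => ∑ a, μ h s a b) h s a b
          ≤ Qrec H r φ θb Sb β 1 μ h s a b + ((H : ℝ) - h + 1) * ε) ∧
      (VrecAt H r φ θl Sl β (-1) μ h s - ((H : ℝ) - h + 2) * ε
          ≤ VminBR H r P (fun h s a => ∑ b, μ h s a b) h s ∧
        VminBR H r P (fun h s a => ∑ b, μ h s a b) h s
          ≤ VmaxBR H r P (fun h s b => ∑ a, μ h s a b) h s ∧
        VmaxBR H r P (fun h s b => ∑ a, μ h s a b) h s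
          ≤ VrecAt H r φ θb Sb β 1 μ h s + ((H : ℝ) - h + 2) * ε) := by
  intro h h1 hH s a b
  have hπ : IsPolicy fun h s a => ∑ b, μ h s a b := isPolicy_sum_snd hμ
  have hν : IsPolicy fun h s b => ∑ a, μ h s a b := isPolicy_sum_fst hμ
  have hdevb : ∀ h, 1 ≤ h → h ≤ H → ∀ s a',
      ∑ b, (∑ a, μ h s a b) * Qrec H r φ θb Sb β 1 μ h s a' b
        ≤ VrecAt H r φ θb Sb β 1 μ h s + ε := fun h h1 hH s a' => by
    rw [vrecAt_eq_sum_qrec hH]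
    linarith [(hCCE h h1 hH s).1 a']
  have hdevl : ∀ h, 1 ≤ h → h ≤ H → ∀ s b',
      VrecAt H r φ θl Sl β (-1) μ h s - ε
        ≤ ∑ a, (∑ b, μ h s a b) * Qrec H r φ θl Sl β (-1) μ h s a b' := fun h h1 hH s b' => by
    rw [vrecAt_eq_sum_qrec hH]
    linarith [(hCCE h h1 hH s).2 b']
  have hθb := fun h h1 hH => (hconf h h1 hH).1
  have hθl := fun h h1 hH => (hconf h h1 hH).2
  refine ⟨⟨le_qminBR fun q hq => ?_, qminBR_le_qmaxBR hGame hπ hν, qmaxBR_le fun p hp => ?_⟩,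
    ⟨le_vminBR fun q hq => ?_, vminBR_le_vmaxBR hGame hπ hν, vmaxBR_le fun p hp => ?_⟩⟩
  · exact qrec_sub_le_qval hGame hmix hSl hε hπ hθl hdevl hq h1 hH s a b
  · exact qval_le_qrec_add hGame hmix hSb hε hν hθb hdevb hp h1 hH s a b
  · exact vrecAt_sub_le_vval hGame hmix hSl hε hπ hθl hdevl hq h1 (by omega) s
  · exact vval_le_vrecAt_add hGame hmix hSb hε hν hθb hdevb hp h1 (by omega) s

/-- Optimism and pessimism of the value estimates (Lemma A.6): under the confidence-set
conditions, the pessimistic estimates lower-bound (up to `(H−h+1)ε`, resp. `(H−h+2)ε`)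
and the optimistic estimates upper-bound the best-response values of the marginal
policies of the ε-CCE joint distributions `μ`. -/
theorem optimism_pessimism
    {S A B : Type*} [Fintype S] [Fintype A] [Fintype B]
    [Nonempty S] [Nonempty A] [Nonempty B] {d : ℕ}
    (H : ℕ) (hH : 1 ≤ H)
    (r : ℕ → S → A → B → ℝ) (P : ℕ → S → A → B → S → ℝ)
    (hGame : IsGame r P)
    (φ : S → A → B → S → Fin d → ℝ) (θs : ℕ → Fin d → ℝ)
    (hmix : ∀ h s a b s', P h s a b s' = φ s a b s' ⬝ᵥ θs h)
    (ε β : ℝ) (hε : 0 ≤ ε) (hβ : 0 < β)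
    (θb θl : ℕ → Fin d → ℝ)
    (Sb Sl : ℕ → Matrix (Fin d) (Fin d) ℝ)
    (hSb : ∀ h, (Sb h).PosDef) (hSl : ∀ h, (Sl h).PosDef)
    (μ : ℕ → S → A → B → ℝ)
    (hμ : ∀ h s, (∀ a b, 0 ≤ μ h s a b) ∧ ∑ a, ∑ b, μ h s a b = 1)
    -- ε-CCE conditions for (Q̄_h(s,·,·), Q̲_h(s,·,·)) at every step and state:
    (hCCE : ∀ h, 1 ≤ h → h ≤ H → ∀ s : S,
      (∀ a' : A,
        (∑ b, (∑ a, μ h s a b) * Qrec H r φ θb Sb β 1 μ h s a' b) - ε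
          ≤ ∑ a, ∑ b, μ h s a b * Qrec H r φ θb Sb β 1 μ h s a b) ∧
      (∀ b' : B,
        ∑ a, ∑ b, μ h s a b * Qrec H r φ θl Sl β (-1) μ h s a b
          ≤ (∑ a, (∑ b, μ h s a b) * Qrec H r φ θl Sl β (-1) μ h s a b') + ε))
    -- confidence-set conditions:
    (hconf : ∀ h, 1 ≤ h → h ≤ H →
      wnorm (Sb h) (θb h - θs h) ≤ β ∧ wnorm (Sl h) (θl h - θs h) ≤ β) :
    ∀ h, 1 ≤ h → h ≤ H → ∀ (s : S) (a : A) (b : B),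
      (Qrec H r φ θl Sl β (-1) μ h s a b - ((H : ℝ) - h + 1) * ε
          ≤ QminBR H r P (fun h s a => ∑ b, μ h s a b) h s a b ∧
        QminBR H r P (fun h s a => ∑ b, μ h s a b) h s a b
          ≤ QmaxBR H r P (fun h s b => ∑ a, μ h s a b) h s a b ∧
        QmaxBR H r P (fun h s b => ∑ a, μ h s a b) h s a b
          ≤ Qrec H r φ θb Sb β 1 μ h s a b + ((H : ℝ) - h + 1) * ε) ∧
      (VrecAt H r φ θl Sl β (-1) μ h s - ((H : ℝ) - h + 2) * ε
          ≤ VminBR H r P (fun h s a => ∑ b, μ h s a b) h s ∧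
        VminBR H r P (fun h s a => ∑ b, μ h s a b) h s
          ≤ VmaxBR H r P (fun h s b => ∑ a, μ h s a b) h s ∧
        VmaxBR H r P (fun h s b => ∑ a, μ h s a b) h s
          ≤ VrecAt H r φ θb Sb β 1 μ h s + ((H : ℝ) - h + 2) * ε) :=
  optimism_pessimism_general H r P hGame φ θs hmix ε β hε θb θl Sb Sl hSb hSl μ hμ hCCE hconf
end

section
/- Per-step gap bound between optimistic and pessimistic action-value estimates: in a finite linear mixture Markov game, fix h ∈ {1,…,H} and functions V̄_{h+1}, V̲_{h+1} : S → [−H, H] with V̲_{h+1}(s') ≤ V̄_{h+1}(s') for all s'. Let θ̄, θ̲ ∈ ℝ^d, Σ̄, Σ̲ positive definite, β > 0, and σ̄, σ̲ > 0 with βσ̄ ≥ 2H and βσ̲ ≥ 2H, and assume ‖θ̄ − θ*_h‖_{Σ̄} ≤ β and ‖θ̲ − θ*_h‖_{Σ̲} ≤ β. Define Q̄(s,a,b) = clip_{[−H,H]}( r_h(s,a,b) + ⟨θ̄, φ_{V̄_{h+1}}(s,a,b)⟩ + β‖φ_{V̄_{h+1}}(s,a,b)‖_{Σ̄⁻¹}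 ) and Q̲(s,a,b) = clip_{[−H,H]}( r_h(s,a,b) + ⟨θ̲, φ_{V̲_{h+1}}(s,a,b)⟩ − β‖φ_{V̲_{h+1}}(s,a,b)‖_{Σ̲⁻¹} ). Then for every (s,a,b): Q̄(s,a,b) − Q̲(s,a,b) ≤ 2βσ̄ · min{1, ‖φ_{V̄_{h+1}}(s,a,b)‖_{Σ̄⁻¹}/σ̄} + 2βσ̲ · min{1, ‖φ_{V̲_{h+1}}(s,a,b)‖_{Σ̲⁻¹}/σ̲} + [P_h V̄_{h+1}](s,a,b) − [P_h V̲_{h+1}](s,a,b). -/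
open BigOperators Finset Matrix

lemma psd_dot_nonneg {d : ℕ} {M : Matrix (Fin d) (Fin d) ℝ}
    (hM : M.PosSemidef) (x : Fin d → ℝ) : 0 ≤ x ⬝ᵥ M.mulVec x := by
  simpa using hM.re_dotProduct_nonneg x

lemma wnorm_nonneg {d : ℕ} (M : Matrix (Fin d) (Fin d) ℝ) (x : Fin d → ℝ) :
    0 ≤ wnorm M x := Real.sqrt_nonneg _

lemma dot_symm {d : ℕ} {M : Matrix (Fin d) (Fin d) ℝ} (hM : M.IsHermitian)
    (p q : Fin d → ℝ) : p ⬝ᵥ M.mulVec q = q ⬝ᵥ M.mulVec p := by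
  have ht : Mᵀ = M := by
    simpa [Matrix.conjTranspose_eq_transpose_of_trivial] using hM.eq
  rw [Matrix.dotProduct_mulVec, ← Matrix.mulVec_transpose, ht, dotProduct_comm]

lemma cauchy_schwarz_wnorm {d : ℕ} {M : Matrix (Fin d) (Fin d) ℝ} (hM : M.PosDef)
    (x y : Fin d → ℝ) : |x ⬝ᵥ y| ≤ wnorm M⁻¹ x * wnorm M y := by
  have hA : (M⁻¹).PosDef := hM.inv
  set A := M⁻¹ with hAdef
  set q := M.mulVec y with hq
  have hdet : IsUnit M.det := hM.det_pos.ne'.isUnit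
  have hAq : A.mulVec q = y := by
    rw [hq, Matrix.mulVec_mulVec, hAdef, Matrix.nonsing_inv_mul _ hdet, Matrix.one_mulVec]
  set pp := x ⬝ᵥ A.mulVec x with hpp
  set qq := q ⬝ᵥ A.mulVec q with hqq
  set pq := x ⬝ᵥ A.mulVec q with hpq
  have hpq' : pq = x ⬝ᵥ y := by rw [hpq, hAq]
  have hqq' : qq = y ⬝ᵥ M.mulVec y := by
    rw [hqq, hAq, dotProduct_comm]
  have hquad : ∀ t : ℝ, 0 ≤ qq * (t * t) + (2 * pq) * t + pp := by
    intro t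
    have h0 : 0 ≤ (x + t • q) ⬝ᵥ A.mulVec (x + t • q) :=
      psd_dot_nonneg hA.posSemidef _
    have hsym := dot_symm hA.isHermitian q x
    simp only [Matrix.mulVec_add, Matrix.mulVec_smul, dotProduct_add, add_dotProduct,
      dotProduct_smul, smul_dotProduct, smul_eq_mul] at h0
    rw [hsym] at h0
    nlinarith [h0]
  have hdisc := discrim_le_zero hquad
  have hsq : pq ^ 2 ≤ pp * qq := by
    simp only [discrim] at hdisc; nlinarith
  have hpp0 : 0 ≤ pp := psd_dot_nonneg hA.posSemidef x
  have hqq0 : 0 ≤ qq := psd_dot_nonneg hA.posSemidef q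
  calc |x ⬝ᵥ y| = Real.sqrt (pq ^ 2) := by rw [Real.sqrt_sq_eq_abs, hpq']
    _ ≤ Real.sqrt (pp * qq) := Real.sqrt_le_sqrt hsq
    _ = Real.sqrt pp * Real.sqrt qq := Real.sqrt_mul hpp0 _
    _ = wnorm M⁻¹ x * wnorm M y := by rw [wnorm, wnorm, ← hqq']

/-- Per-step gap bound between the optimistic and pessimistic action-value estimates
(key inequality in the proof of Lemma B.4). -/
theorem per_step_gap
    {S A B : Type*} [Fintype S] [Fintype A] [Fintype B] {d : ℕ}
    (H : ℕ) (hH : 1 ≤ H)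
    (r : ℕ → S → A → B → ℝ) (P : ℕ → S → A → B → S → ℝ)
    (hGame : IsGame r P)
    (φ : S → A → B → S → Fin d → ℝ) (θs : ℕ → Fin d → ℝ)
    (hmix : ∀ h s a b s', P h s a b s' = φ s a b s' ⬝ᵥ θs h)
    (h : ℕ) (hh1 : 1 ≤ h) (hh2 : h ≤ H)
    (Vb Vl : S → ℝ)
    (hVb : ∀ s', |Vb s'| ≤ (H : ℝ)) (hVl : ∀ s', |Vl s'| ≤ (H : ℝ))
    (hdom : ∀ s', Vl s' ≤ Vb s')
    (θb θl : Fin d → ℝ)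
    (Sb Sl : Matrix (Fin d) (Fin d) ℝ) (hSb : Sb.PosDef) (hSl : Sl.PosDef)
    (β σb σl : ℝ) (hβ : 0 < β) (hσb : 0 < σb) (hσl : 0 < σl)
    (hβσb : 2 * (H : ℝ) ≤ β * σb) (hβσl : 2 * (H : ℝ) ≤ β * σl)
    (hconfb : wnorm Sb (θb - θs h) ≤ β) (hconfl : wnorm Sl (θl - θs h) ≤ β)
    (s : S) (a : A) (b : B) :
    clip (-(H : ℝ)) H (r h s a b + ((∑ s', Vb s' • φ s a b s') ⬝ᵥ θb)
        + β * wnorm Sb⁻¹ (∑ s', Vb s' • φ s a b s'))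
      - clip (-(H : ℝ)) H (r h s a b + ((∑ s', Vl s' • φ s a b s') ⬝ᵥ θl)
        - β * wnorm Sl⁻¹ (∑ s', Vl s' • φ s a b s'))
    ≤ 2 * β * σb * min 1 (wnorm Sb⁻¹ (∑ s', Vb s' • φ s a b s') / σb)
      + 2 * β * σl * min 1 (wnorm Sl⁻¹ (∑ s', Vl s' • φ s a b s') / σl)
      + (∑ s', P h s a b s' * Vb s') - (∑ s', P h s a b s' * Vl s') := by
  obtain ⟨hr, hP⟩ := hGame
  have hH1 : (1 : ℝ) ≤ (H : ℝ) := by exact_mod_cast hH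
  set φb : Fin d → ℝ := ∑ s', Vb s' • φ s a b s' with hφbdef
  set φl : Fin d → ℝ := ∑ s', Vl s' • φ s a b s' with hφldef
  set nb := wnorm Sb⁻¹ φb with hnbdef
  set nl := wnorm Sl⁻¹ φl with hnldef
  have hnb0 : 0 ≤ nb := wnorm_nonneg _ _
  have hnl0 : 0 ≤ nl := wnorm_nonneg _ _
  have hid : ∀ V : S → ℝ,
      (∑ s', P h s a b s' * V s') = (∑ s', V s' • φ s a b s') ⬝ᵥ θs h := by
    intro V
    simp only [hmix, dotProduct, Finset.sum_apply, Pi.smul_apply, smul_eq_mul,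
      Finset.sum_mul, Finset.mul_sum]
    rw [Finset.sum_comm]
    exact Finset.sum_congr rfl fun s' _ => Finset.sum_congr rfl fun i _ => by ring
  set Pb := ∑ s', P h s a b s' * Vb s' with hPbdef
  set Pl := ∑ s', P h s a b s' * Vl s' with hPldef
  have hPbid : Pb = φb ⬝ᵥ θs h := hid Vb
  have hPlid : Pl = φl ⬝ᵥ θs h := hid Vl
  have hΔ : Pl ≤ Pb :=
    Finset.sum_le_sum fun s' _ =>
      mul_le_mul_of_nonneg_left (hdom s') ((hP h s a b).1 s')
  -- Cauchy–Schwarz bounds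
  have hb1 : φb ⬝ᵥ θb ≤ Pb + β * nb := by
    have hcs := cauchy_schwarz_wnorm hSb φb (θb - θs h)
    have h2 : φb ⬝ᵥ (θb - θs h) = φb ⬝ᵥ θb - φb ⬝ᵥ θs h := dotProduct_sub _ _ _
    have h3 : wnorm Sb⁻¹ φb * wnorm Sb (θb - θs h) ≤ nb * β :=
      mul_le_mul_of_nonneg_left hconfb hnb0
    have h4 := (abs_le.mp (hcs.trans h3)).2
    rw [h2] at h4
    rw [hPbid]; linarith
  have hl1 : Pl - β * nl ≤ φl ⬝ᵥ θl := by
    have hcs := cauchy_schwarz_wnorm hSl φl (θl - θs h)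
    have h2 : φl ⬝ᵥ (θl - θs h) = φl ⬝ᵥ θl - φl ⬝ᵥ θs h := dotProduct_sub _ _ _
    have h3 : wnorm Sl⁻¹ φl * wnorm Sl (θl - θs h) ≤ nl * β :=
      mul_le_mul_of_nonneg_left hconfl hnl0
    have h4 := (abs_le.mp (hcs.trans h3)).1
    rw [h2] at h4
    rw [hPlid]; linarith
  simp only [clip]
  set Qb := max (-(H : ℝ)) (min (r h s a b + φb ⬝ᵥ θb + β * nb) (H : ℝ)) with hQbdef
  set Ql := max (-(H : ℝ)) (min (r h s a b + φl ⬝ᵥ θl - β * nl) (H : ℝ)) with hQldef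
  have hQbH : Qb ≤ (H : ℝ) := max_le (by linarith) (min_le_right _ _)
  have hQlnH : -(H : ℝ) ≤ Ql := le_max_left _ _
  have hQb2 : Qb ≤ max (-(H : ℝ)) (min (r h s a b + Pb + 2 * β * nb) (H : ℝ)) := by
    apply max_le_max le_rfl
    apply min_le_min _ le_rfl
    linarith [hb1]
  have hQl2 : min (r h s a b + Pl - 2 * β * nl) (H : ℝ) ≤ Ql := by
    refine le_trans (min_le_min ?_ le_rfl) (le_max_right _ _)
    linarith [hl1]
  have hmbnn : 0 ≤ 2 * β * σb * min 1 (nb / σb) :=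
    mul_nonneg (by positivity) (le_min zero_le_one (div_nonneg hnb0 hσb.le))
  have hmlnn : 0 ≤ 2 * β * σl * min 1 (nl / σl) :=
    mul_nonneg (by positivity) (le_min zero_le_one (div_nonneg hnl0 hσl.le))
  rcases le_or_gt nb σb with h1 | h1
  · rcases le_or_gt nl σl with h2 | h2
    · have hmb : 2 * β * σb * min 1 (nb / σb) = 2 * β * nb := by
        rw [min_eq_right (by rw [div_le_one hσb]; exact h1)]
        field_simp
      have hml : 2 * β * σl * min 1 (nl / σl) = 2 * β * nl := by
        rw [min_eq_right (by rw [div_le_one hσl]; exact h2)]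
        field_simp
      rw [hmb, hml]
      rcases le_or_gt ((H : ℝ)) (r h s a b + Pl - 2 * β * nl) with h3 | h3
      · have hQlH : (H : ℝ) ≤ Ql := by
          have : min (r h s a b + Pl - 2 * β * nl) (H : ℝ) = (H : ℝ) := min_eq_right h3
          linarith [hQl2, this.ge.trans hQl2]
        have hp1 : 0 ≤ 2 * β * nb := mul_nonneg (by linarith) hnb0
        have hp2 : 0 ≤ 2 * β * nl := mul_nonneg (by linarith) hnl0
        linarith
      · have hQl3 : r h s a b + Pl - 2 * β * nl ≤ Ql := by
          have : min (r h s a b + Pl - 2 * β * nl) (H : ℝ)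
              = r h s a b + Pl - 2 * β * nl := min_eq_left h3.le
          linarith [hQl2]
        rcases le_or_gt (r h s a b + Pb + 2 * β * nb) (-(H : ℝ)) with h4 | h4
        · have hQb3 : Qb ≤ -(H : ℝ) :=
            hQb2.trans (max_le le_rfl ((min_le_left _ _).trans h4))
          have hp1 : 0 ≤ 2 * β * nb := mul_nonneg (by linarith) hnb0
          have hp2 : 0 ≤ 2 * β * nl := mul_nonneg (by linarith) hnl0
          linarith
        · have hQb3 : Qb ≤ r h s a b + Pb + 2 * β * nb :=
            hQb2.trans (max_le h4.le (min_le_left _ _))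
          linarith
    · have hml : 2 * β * σl * min 1 (nl / σl) = 2 * β * σl := by
        rw [min_eq_left ((one_le_div hσl).mpr h2.le)]
        ring
      rw [hml]
      linarith
  · have hmb : 2 * β * σb * min 1 (nb / σb) = 2 * β * σb := by
      rw [min_eq_left ((one_le_div hσb).mpr h1.le)]
      ring
    rw [hmb]
    linarith
end
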